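/- arXiv:1403.1954 — 2 statements merged into one kernel-verified Lean document; each statement's English description precedes it below -/
import Mathlib

section
/- Let ν ≥ 0 and let j_{ν,1} denote the smallest positive zero of J_ν. Then the function g(t) = J_{ν+1}(t) / J_ν(t) is well defined and strictly increasing on the open interval (0, j_{ν,1}); in fact g'(t) > 0 there. -/
/-!
Write `J_ν(t) = (t/2)^ν F_ν((t/2)²)` with the entire series `F_ν = besselSeries ν`. Termwise
differentiation gives `F_ν' = -F_{ν+1}`, and `Γ(ν+k+2) = (ν+k+1) Γ(ν+k+1)` gives
`F_ν = (ν+1) F_{ν+1} - y F_{ν+2}`; hence `J_ν' = (ν/t) J_ν - J_{ν+1}` and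
`J_{ν+1}' = J_ν - ((ν+1)/t) J_{ν+1}`.

Before its first zero `J_ν` is positive, so `J_{ν+1}` can only cross zero upwards and stays
positive as well. The ratio `g = J_{ν+1}/J_ν` satisfies the Riccati equation
`g' = 1 + g² - (2ν+1) g/t`. Near `0` we have `g(t) ~ t/(2ν+2)`, so `g' > 0`; at a first zero of `g'`
differentiating the equation would give `g'' = (2ν+1) g/t² > 0`, which is impossible.
-/

open MeasureTheory Set Filter

/-- Bessel function of the first kind of order `ν`, defined by its power series
(real exponents; intended for `x > 0`). -/
noncomputable def besselJ (ν x : ℝ) : ℝ :=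
  ∑' k : ℕ, ((-1 : ℝ) ^ k / (Nat.factorial k * Real.Gamma (ν + k + 1))) *
    (x / 2) ^ (2 * (k : ℝ) + ν)

open scoped Nat Topology

section FactorialDecay

variable {c : ℕ → ℝ} {C : ℝ}

lemma summable_mul_pow_of_abs_le_div_factorial (hc : ∀ k, |c k| ≤ C / k !) (y : ℝ) :
    Summable fun k => c k * y ^ k := by
  refine .of_norm_bounded ((Real.summable_pow_div_factorial |y|).mul_left C) fun k => ?_
  rw [Real.norm_eq_abs, abs_mul, abs_pow, mul_div_left_comm, mul_comm]
  exact mul_le_mul_of_nonneg_left (hc k) (by positivity)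

lemma hasDerivAt_tsum_mul_pow_of_abs_le_div_factorial (hc : ∀ k, |c k| ≤ C / k !) (y : ℝ) :
    HasDerivAt (fun z => ∑' k, c k * z ^ k) (∑' k, c (k + 1) * (k + 1) * y ^ k) y := by
  set R := |y| + 1
  have hR : 1 ≤ R := by simp [R]
  have hy : y ∈ Metric.ball (0 : ℝ) R := by simp [R]
  -- `k ≤ 2^k` absorbs the factor `k` produced by differentiating `z^k`.
  have hbound : ∀ k, ∀ z ∈ Metric.ball (0 : ℝ) R,
      ‖c k * (k * z ^ (k - 1))‖ ≤ C * ((2 * R) ^ k / k !) := by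
    intro k z hz
    have hzR : |z| ≤ R := (mem_ball_zero_iff.mp hz).le
    have hk : (k : ℝ) * |z| ^ (k - 1) ≤ 2 ^ k * R ^ k :=
      mul_le_mul (by exact_mod_cast k.lt_two_pow_self.le)
        ((pow_le_pow_left₀ (abs_nonneg z) hzR _).trans (pow_le_pow_right₀ hR (k.sub_le 1)))
        (by positivity) (by positivity)
    rw [Real.norm_eq_abs, abs_mul, abs_mul, abs_pow, Nat.abs_cast, mul_pow,
      mul_div_left_comm, mul_comm]
    exact mul_le_mul hk (hc k) (abs_nonneg _) (by positivity)
  have hderiv := hasDerivAt_tsum_of_isPreconnected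
    ((Real.summable_pow_div_factorial (2 * R)).mul_left C) Metric.isOpen_ball
    (convex_ball (0 : ℝ) R).isPreconnected
    (fun k z _ => (hasDerivAt_pow k z).const_mul (c k)) hbound
    (Metric.mem_ball_self (by positivity))
    (summable_mul_pow_of_abs_le_div_factorial hc 0) hy
  have hsum : Summable fun k => c k * (k * y ^ (k - 1)) :=
    .of_norm_bounded ((Real.summable_pow_div_factorial (2 * R)).mul_left C) (hbound · y hy)
  rw [hsum.tsum_eq_zero_add] at hderiv
  simpa [mul_assoc] using hderiv

end FactorialDecay

noncomputable def besselCoeff (ν : ℝ) (k : ℕ) : ℝ :=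
  (-1) ^ k / (k ! * Real.Gamma (ν + k + 1))

noncomputable def besselSeries (ν y : ℝ) : ℝ :=
  ∑' k, besselCoeff ν k * y ^ k

section BesselSeries

variable {ν : ℝ}

lemma Gamma_add_one_le_Gamma_add_nat_add_one (hν : 0 ≤ ν) (k : ℕ) :
    Real.Gamma (ν + 1) ≤ Real.Gamma (ν + k + 1) := by
  induction k with
  | zero => simp
  | succ k ih =>
    rw [Nat.cast_succ, show ν + (k + 1) + 1 = ν + k + 1 + 1 by ring,
      Real.Gamma_add_one (s := ν + k + 1) (by positivity)]
    exact ih.trans (le_mul_of_one_le_left (Real.Gamma_pos_of_pos (by positivity)).le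
      (by linarith [k.cast_nonneg (α := ℝ)]))

lemma abs_besselCoeff_le (hν : 0 ≤ ν) (k : ℕ) :
    |besselCoeff ν k| ≤ (Real.Gamma (ν + 1))⁻¹ / k ! := by
  have hle := Gamma_add_one_le_Gamma_add_nat_add_one hν k
  have hΓ : 0 < Real.Gamma (ν + 1) := Real.Gamma_pos_of_pos (by linarith)
  rw [besselCoeff, abs_div, abs_pow, abs_neg, abs_one, one_pow,
    abs_of_pos (mul_pos (by positivity) (hΓ.trans_le hle)), inv_div_left, ← one_div]
  exact one_div_le_one_div_of_le (mul_pos (by positivity) hΓ) (by gcongr)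

lemma besselCoeff_succ_mul (k : ℕ) :
    besselCoeff ν (k + 1) * (k + 1) = -besselCoeff (ν + 1) k := by
  rw [besselCoeff, besselCoeff, Nat.factorial_succ, pow_succ,
    show ν + (k + 1 : ℕ) + 1 = ν + 1 + k + 1 by push_cast; ring]
  have : (k + 1 : ℝ) ≠ 0 := by positivity
  push_cast
  field_simp

lemma besselCoeff_eq_mul_besselCoeff_add_one (hν : 0 ≤ ν) (k : ℕ) :
    besselCoeff ν k = (ν + k + 1) * besselCoeff (ν + 1) k := by
  have : ν + k + 1 ≠ 0 := by positivity
  rw [besselCoeff, besselCoeff, show ν + 1 + k + 1 = ν + k + 1 + 1 by ring,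
    Real.Gamma_add_one this]
  field_simp

lemma summable_besselSeries (hν : 0 ≤ ν) (y : ℝ) :
    Summable fun k => besselCoeff ν k * y ^ k :=
  summable_mul_pow_of_abs_le_div_factorial (abs_besselCoeff_le hν) y

lemma hasDerivAt_besselSeries (hν : 0 ≤ ν) (y : ℝ) :
    HasDerivAt (besselSeries ν) (-besselSeries (ν + 1) y) y := by
  have h := hasDerivAt_tsum_mul_pow_of_abs_le_div_factorial (abs_besselCoeff_le hν) y
  simp_rw [besselCoeff_succ_mul, neg_mul, tsum_neg] at h
  exact h

lemma continuous_besselSeries (hν : 0 ≤ ν) : Continuous (besselSeries ν) :=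
  continuous_iff_continuousAt.2 fun y => (hasDerivAt_besselSeries hν y).continuousAt

lemma besselSeries_zero : besselSeries ν 0 = (Real.Gamma (ν + 1))⁻¹ := by
  rw [besselSeries, tsum_eq_single 0 fun k hk => by simp [zero_pow hk]]
  simp [besselCoeff]

lemma besselSeries_eq_sub (hν : 0 ≤ ν) (y : ℝ) :
    besselSeries ν y = (ν + 1) * besselSeries (ν + 1) y - y * besselSeries (ν + 2) y := by
  have hshift : ∀ k : ℕ, ((k + 1 : ℕ) : ℝ) * besselCoeff (ν + 1) (k + 1) * y ^ (k + 1)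
      = -(y * (besselCoeff (ν + 2) k * y ^ k)) := fun k => by
    rw [Nat.cast_succ, mul_comm _ (besselCoeff _ _), besselCoeff_succ_mul,
      show ν + 1 + 1 = ν + 2 by ring]
    ring
  have hsum : Summable fun k : ℕ => (k : ℝ) * besselCoeff (ν + 1) k * y ^ k := by
    refine (summable_nat_add_iff 1).mp ?_
    simp only [hshift]
    exact ((summable_besselSeries (by linarith) y).mul_left y).neg
  have hmul : ∑' k : ℕ, (k : ℝ) * besselCoeff (ν + 1) k * y ^ k
      = -(y * besselSeries (ν + 2) y) := by
    rw [hsum.tsum_eq_zero_add]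
    simp only [hshift, tsum_neg, tsum_mul_left, besselSeries, CharP.cast_eq_zero, zero_mul,
      zero_add]
  calc besselSeries ν y
      = ∑' k : ℕ, ((ν + 1) * (besselCoeff (ν + 1) k * y ^ k)
          + (k : ℝ) * besselCoeff (ν + 1) k * y ^ k) := by
        refine tsum_congr fun k => ?_
        rw [besselCoeff_eq_mul_besselCoeff_add_one hν]
        ring
    _ = _ := by
        rw [Summable.tsum_add ((summable_besselSeries (by linarith) y).mul_left _) hsum,
          tsum_mul_left, hmul, ← sub_eq_add_neg]
        rfl

end BesselSeries

lemma besselJ_eq_rpow_mul_besselSeries (ν : ℝ) {t : ℝ} (ht : 0 < t) :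
    besselJ ν t = (t / 2) ^ ν * besselSeries ν ((t / 2) ^ 2) := by
  rw [besselJ, besselSeries, ← tsum_mul_left]
  refine tsum_congr fun k => ?_
  rw [Real.rpow_add (by positivity), show 2 * (k : ℝ) = (2 * k : ℕ) by push_cast; ring,
    Real.rpow_natCast, pow_mul, besselCoeff]
  ring

section BesselJ

variable {ν t : ℝ}

lemma hasDerivAt_besselJ (hν : 0 ≤ ν) (ht : 0 < t) :
    HasDerivAt (besselJ ν) (ν / t * besselJ ν t - besselJ (ν + 1) t) t := by
  have ht2 : 0 < t / 2 := by positivity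
  have hhalf : HasDerivAt (fun s : ℝ => s / 2) (1 / 2) t := (hasDerivAt_id t).div_const 2
  have hpow := (Real.hasDerivAt_rpow_const (p := ν) (Or.inl ht2.ne')).comp t hhalf
  have hser := (hasDerivAt_besselSeries hν ((t / 2) ^ 2)).comp t (hhalf.fun_pow 2)
  have heq : (fun s => (s / 2) ^ ν * besselSeries ν ((s / 2) ^ 2)) =ᶠ[𝓝 t] besselJ ν := by
    filter_upwards [eventually_gt_nhds ht] with s hs
    exact (besselJ_eq_rpow_mul_besselSeries ν hs).symm
  refine ((hpow.mul hser).congr_of_eventuallyEq heq.symm).congr_deriv ?_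
  simp only [Function.comp_apply]
  rw [besselJ_eq_rpow_mul_besselSeries ν ht, besselJ_eq_rpow_mul_besselSeries (ν + 1) ht,
    Real.rpow_sub_one ht2.ne', Real.rpow_add_one ht2.ne']
  field_simp
  ring

lemma besselJ_add_two (hν : 0 ≤ ν) (ht : 0 < t) :
    besselJ (ν + 2) t = 2 * (ν + 1) / t * besselJ (ν + 1) t - besselJ ν t := by
  have ht2 : 0 < t / 2 := by positivity
  rw [besselJ_eq_rpow_mul_besselSeries ν ht, besselJ_eq_rpow_mul_besselSeries (ν + 1) ht,
    besselJ_eq_rpow_mul_besselSeries (ν + 2) ht, besselSeries_eq_sub hν,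
    Real.rpow_add_one ht2.ne', Real.rpow_add ht2, show (2 : ℝ) = (2 : ℕ) by norm_num,
    Real.rpow_natCast]
  field_simp
  ring

lemma hasDerivAt_besselJ_add_one (hν : 0 ≤ ν) (ht : 0 < t) :
    HasDerivAt (besselJ (ν + 1)) (besselJ ν t - (ν + 1) / t * besselJ (ν + 1) t) t := by
  convert hasDerivAt_besselJ (ν := ν + 1) (by linarith) ht using 1
  rw [add_assoc, one_add_one_eq_two, besselJ_add_two hν ht]
  field_simp
  ring

lemma tendsto_besselSeries_sq_half (hν : 0 ≤ ν) :
    Tendsto (fun t => besselSeries ν ((t / 2) ^ 2)) (𝓝[>] 0) (𝓝 (Real.Gamma (ν + 1))⁻¹) := by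
  rw [← besselSeries_zero]
  have h : Continuous fun t : ℝ => besselSeries ν ((t / 2) ^ 2) := by
    have := continuous_besselSeries hν; fun_prop
  simpa using (h.tendsto 0).mono_left nhdsWithin_le_nhds

lemma eventually_besselJ_pos (hν : 0 ≤ ν) : ∀ᶠ t in 𝓝[>] 0, 0 < besselJ ν t := by
  have hΓ : 0 < (Real.Gamma (ν + 1))⁻¹ := inv_pos.2 (Real.Gamma_pos_of_pos (by linarith))
  filter_upwards [self_mem_nhdsWithin, (tendsto_besselSeries_sq_half hν).eventually_const_lt hΓ]
    with t (ht : 0 < t) hser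
  rw [besselJ_eq_rpow_mul_besselSeries ν ht]
  exact mul_pos (by positivity) hser

lemma eventually_mul_besselJ_add_one_lt (hν : 0 ≤ ν) :
    ∀ᶠ t in 𝓝[>] 0, (2 * ν + 1) * besselJ (ν + 1) t < t * besselJ ν t := by
  have hΓ : 0 < Real.Gamma (ν + 1) := Real.Gamma_pos_of_pos (by linarith)
  -- At `t = 0` the comparison reads `(2ν + 1) / Γ(ν + 2) < 2 / Γ(ν + 1)`, i.e. `2ν + 1 < 2ν + 2`.
  have hlim : (2 * ν + 1) * (Real.Gamma (ν + 1 + 1))⁻¹ < 2 * (Real.Gamma (ν + 1))⁻¹ := by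
    rw [Real.Gamma_add_one (by positivity), mul_inv, ← mul_assoc]
    refine mul_lt_mul_of_pos_right ?_ (inv_pos.2 hΓ)
    rw [← div_eq_mul_inv, div_lt_iff₀ (by positivity)]
    linarith
  filter_upwards [self_mem_nhdsWithin,
    (((tendsto_besselSeries_sq_half (ν := ν + 1) (by linarith)).const_mul _).sub
      ((tendsto_besselSeries_sq_half hν).const_mul 2)).eventually_lt_const (sub_neg.2 hlim)]
    with t (ht : 0 < t) hser
  have ht2 : 0 < t / 2 := by positivity
  rw [besselJ_eq_rpow_mul_besselSeries ν ht, besselJ_eq_rpow_mul_besselSeries (ν + 1) ht,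
    Real.rpow_add_one ht2.ne']
  have := mul_lt_mul_of_pos_left (sub_neg.1 hser) (mul_pos (Real.rpow_pos_of_pos ht2 ν) ht2)
  linarith

end BesselJ

section SignArguments

variable {D D' : ℝ → ℝ} {a b : ℝ}

lemma pos_of_continuousOn_of_ne_zero (hD : ContinuousOn D (Ioo a b))
    (hne : ∀ t ∈ Ioo a b, D t ≠ 0) (hnear : ∀ᶠ t in 𝓝[>] a, 0 < D t) :
    ∀ t ∈ Ioo a b, 0 < D t := by
  intro t ht
  obtain ⟨hDs, hs⟩ := (hnear.and (Ioo_mem_nhdsGT ht.1)).exists.choose_spec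
  by_contra hle
  obtain ⟨u, hu, hDu⟩ := isPreconnected_Ioo.intermediate_value ht ⟨hs.1, hs.2.trans ht.2⟩ hD
    ⟨not_lt.1 hle, hDs.le⟩
  exact hne u hu hDu

lemma pos_of_hasDerivAt_pos_of_eq_zero (hD : ∀ t ∈ Ioo a b, HasDerivAt D (D' t) t)
    (hcross : ∀ t ∈ Ioo a b, D t = 0 → 0 < D' t) (hnear : ∀ᶠ t in 𝓝[>] a, 0 < D t) :
    ∀ t ∈ Ioo a b, 0 < D t := by
  intro t ht
  obtain ⟨s, hDs, hs⟩ := (hnear.and (Ioo_mem_nhdsGT ht.1)).exists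
  have hsub : ∀ x ∈ Ico s b, Icc s x ⊆ Ioo a b := fun x hx y hy =>
    ⟨hs.1.trans_le hy.1, hy.2.trans_lt hx.2⟩
  have hnonneg : ∀ x ∈ Ico s b, 0 ≤ D x := by
    intro x hx
    have hDx : ∀ y ∈ Icc s x, HasDerivAt D (D' y) y := fun y hy => hD y (hsub x hx hy)
    have := image_le_of_deriv_right_lt_deriv_boundary' (f := fun y => -D y)
      (f' := fun y => -D' y) (B := 0) (B' := 0)
      (fun y hy => (hDx y hy).continuousAt.continuousWithinAt.neg)
      (fun y hy => (hDx y (Ico_subset_Icc_self hy)).neg.hasDerivWithinAt)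
      (by simpa using hDs.le) continuousOn_const (fun y _ => hasDerivWithinAt_const _ _ _)
      (fun y hy hy0 => neg_lt_zero.2 (hcross y (hsub x hx (Ico_subset_Icc_self hy))
        (neg_eq_zero.1 hy0))) (right_mem_Icc.2 hx.1)
    simpa using this
  -- A zero of `D` would be a local minimum, where `D'` vanishes.
  by_contra hle
  have h0 : D t = 0 := le_antisymm (not_lt.1 hle) (hnonneg t ⟨hs.2.le, ht.2⟩)
  have hmin : IsLocalMin D t := by
    filter_upwards [Ioo_mem_nhds hs.2 ht.2] with x hx
    exact h0 ▸ hnonneg x ⟨hx.1.le, hx.2⟩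
  exact (hcross t ht h0).ne' (hmin.hasDerivAt_eq_zero (hD t ht))

lemma riccati_rhs_pos {g : ℝ → ℝ} {c : ℝ} (hc : 0 < c)
    (hg : ∀ t ∈ Ioo 0 b, HasDerivAt g (1 + g t ^ 2 - c * g t / t) t)
    (hgpos : ∀ t ∈ Ioo 0 b, 0 < g t) (hnear : ∀ᶠ t in 𝓝[>] 0, 0 < 1 + g t ^ 2 - c * g t / t) :
    ∀ t ∈ Ioo 0 b, 0 < 1 + g t ^ 2 - c * g t / t := by
  refine pos_of_hasDerivAt_pos_of_eq_zero
    (D' := fun t => 2 * g t * (1 + g t ^ 2 - c * g t / t)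
      - c * ((1 + g t ^ 2 - c * g t / t) * t - g t) / t ^ 2)
    (fun t ht => ?_) (fun t ht h0 => ?_) hnear
  · refine (((hasDerivAt_const t 1).add ((hg t ht).pow 2)).sub
      (((hg t ht).const_mul c).div (hasDerivAt_id t) ht.1.ne')).congr_deriv ?_
    simp only [id_eq]
    ring
  · rw [h0, mul_zero, zero_mul, zero_sub, zero_sub, mul_neg, neg_div, neg_neg]
    exact div_pos (mul_pos hc (hgpos t ht)) (pow_pos ht.1 2)

end SignArguments

lemma hasDerivAt_besselJ_add_one_div_besselJ {ν t : ℝ} (hν : 0 ≤ ν) (ht : 0 < t)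
    (hJ : besselJ ν t ≠ 0) :
    HasDerivAt (fun t => besselJ (ν + 1) t / besselJ ν t)
      (1 + (besselJ (ν + 1) t / besselJ ν t) ^ 2
        - (2 * ν + 1) * (besselJ (ν + 1) t / besselJ ν t) / t) t := by
  refine ((hasDerivAt_besselJ_add_one hν ht).div (hasDerivAt_besselJ hν ht) hJ).congr_deriv ?_
  field_simp
  ring

lemma eventually_riccati_rhs_besselJ_pos {ν : ℝ} (hν : 0 ≤ ν) :
    ∀ᶠ t in 𝓝[>] 0, 0 < 1 + (besselJ (ν + 1) t / besselJ ν t) ^ 2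
      - (2 * ν + 1) * (besselJ (ν + 1) t / besselJ ν t) / t := by
  filter_upwards [self_mem_nhdsWithin, eventually_besselJ_pos hν,
    eventually_mul_besselJ_add_one_lt hν] with t (ht : 0 < t) hJ hlt
  have : (2 * ν + 1) * (besselJ (ν + 1) t / besselJ ν t) / t < 1 := by
    rw [mul_div_assoc', div_div, div_lt_one (by positivity), mul_comm (besselJ ν t)]
    exact hlt
  nlinarith [sq_nonneg (besselJ (ν + 1) t / besselJ ν t)]

/-- `g(t) = J_{ν+1}(t)/J_ν(t)` is well defined and strictly increasing
on `(0, j_{ν,1})`, with `g'(t) > 0` there. -/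
theorem besselJ_ratio_strictMono (ν j : ℝ) (hν : 0 ≤ ν)
    (hj : IsLeast {x : ℝ | 0 < x ∧ besselJ ν x = 0} j) :
    (∀ t ∈ Set.Ioo (0 : ℝ) j, besselJ ν t ≠ 0) ∧
    StrictMonoOn (fun t => besselJ (ν + 1) t / besselJ ν t) (Set.Ioo 0 j) ∧
    ∀ t ∈ Set.Ioo (0 : ℝ) j,
      0 < deriv (fun t => besselJ (ν + 1) t / besselJ ν t) t := by
  have hne : ∀ t ∈ Ioo 0 j, besselJ ν t ≠ 0 := fun t ht h0 => (hj.2 ⟨ht.1, h0⟩).not_gt ht.2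
  have hJ : ∀ t ∈ Ioo 0 j, 0 < besselJ ν t :=
    pos_of_continuousOn_of_ne_zero
      (fun t ht => (hasDerivAt_besselJ hν ht.1).continuousAt.continuousWithinAt) hne
      (eventually_besselJ_pos hν)
  have hJ₁ : ∀ t ∈ Ioo 0 j, 0 < besselJ (ν + 1) t :=
    pos_of_hasDerivAt_pos_of_eq_zero (fun t ht => hasDerivAt_besselJ_add_one hν ht.1)
      (fun t ht h0 => by simpa [h0] using hJ t ht) (eventually_besselJ_pos (by linarith))
  have hderiv := fun t (ht : t ∈ Ioo 0 j) =>
    hasDerivAt_besselJ_add_one_div_besselJ hν ht.1 (hne t ht)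
  have hpos := riccati_rhs_pos (by linarith) hderiv (fun t ht => div_pos (hJ₁ t ht) (hJ t ht))
    (eventually_riccati_rhs_besselJ_pos hν)
  refine ⟨hne, strictMonoOn_of_deriv_pos (convex_Ioo 0 j)
    (fun t ht => (hderiv t ht).continuousAt.continuousWithinAt) fun t ht => ?_,
    fun t ht => (hderiv t ht).deriv ▸ hpos t ht⟩
  rw [interior_Ioo] at ht
  exact (hderiv t ht).deriv ▸ hpos t ht
end

section
/- Let Ω ⊂ ℝⁿ be a bounded measurable set, let f : Ω → [0,∞) be an integrable measurable function such that |{x ∈ Ω : f(x) = s}| = 0 for every s ≥ 0, let 0 < α < β, and let 0 < A < |Ω|. Set t = inf{ s ∈ ℝ : |{x ∈ Ω : f(x) ≤ s}| ≥ A } and D₁ = {x ∈ Ω : f(x) ≤ t}. If D ⊂ Ω is a measurable set with |D| = A whose symmetric difference with D₁ has positive measure, then the strict inequality ∫_Ω (β χ_{D₁} + α χ_{D₁ᶜ}) f dx < ∫_Ω (β χ_D + α χ_{Dᶜ}) f dx holds. -/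
/-!
The distribution function `s ↦ |{x ∈ Ω | f x ≤ s}|` is right-continuous, and since the level
sets of `f` are null it is also left-continuous; hence the sublevel set `D₁` at the quantile `t`
has measure exactly `A = |D|`. Then `D \ D₁` and `D₁ \ D` have the same positive measure, with
`f > t` on the first and `f ≤ t` on the second, so `∫_{D₁} f < ∫_D f`. Finally the weighted
integral for a set `E ⊆ Ω` equals `α ∫_Ω f + (β - α) ∫_E f`, strictly increasing in `∫_E f`.
-/

open MeasureTheory Set
open scoped ENNReal symmDiff

section Quantile

variable {α : Type*} [MeasurableSpace α] {μ : Measure α} {Ω : Set α} {f : α → ℝ} {t A : ℝ}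
  {c : ℝ≥0∞}

lemma measure_sep_lt_le_of_forall_lt (h : ∀ s < t, μ {x ∈ Ω | f x ≤ s} ≤ c) :
    μ {x ∈ Ω | f x < t} ≤ c := by
  obtain ⟨u, hu_mono, hu_lt, hu_tendsto⟩ := exists_seq_strictMono_tendsto t
  have hunion : {x ∈ Ω | f x < t} = ⋃ n, {x ∈ Ω | f x ≤ u n} := by
    ext x
    simp only [mem_ofPred_eq, mem_iUnion]
    constructor
    · rintro ⟨hxΩ, hxt⟩
      obtain ⟨n, hn⟩ := (hu_tendsto.eventually (lt_mem_nhds hxt)).exists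
      exact ⟨n, hxΩ, hn.le⟩
    · rintro ⟨n, hxΩ, hxu⟩
      exact ⟨hxΩ, hxu.trans_lt (hu_lt n)⟩
  have hmono : Monotone fun n => {x ∈ Ω | f x ≤ u n} :=
    fun _ _ hnm _ hx => ⟨hx.1, hx.2.trans (hu_mono.monotone hnm)⟩
  rw [hunion, hmono.measure_iUnion]
  exact iSup_le fun n => h _ (hu_lt n)

lemma le_measure_sep_le_of_forall_gt (hΩm : MeasurableSet Ω) (hΩ : μ Ω ≠ ∞)
    (hfm : Measurable f) (h : ∀ s > t, c ≤ μ {x ∈ Ω | f x ≤ s}) :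
    c ≤ μ {x ∈ Ω | f x ≤ t} := by
  obtain ⟨u, hu_anti, hu_gt, hu_tendsto⟩ := exists_seq_strictAnti_tendsto t
  have hinter : {x ∈ Ω | f x ≤ t} = ⋂ n, {x ∈ Ω | f x ≤ u n} := by
    ext x
    simp only [mem_ofPred_eq, mem_iInter]
    constructor
    · rintro ⟨hxΩ, hxt⟩ n
      exact ⟨hxΩ, hxt.trans (hu_gt n).le⟩
    · intro hx
      exact ⟨(hx 0).1, ge_of_tendsto' hu_tendsto fun n => (hx n).2⟩
  have hanti : Antitone fun n => {x ∈ Ω | f x ≤ u n} :=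
    fun _ _ hnm _ hx => ⟨hx.1, hx.2.trans (hu_anti.antitone hnm)⟩
  rw [hinter, hanti.measure_iInter
    (fun n => (hΩm.inter (hfm measurableSet_Iic)).nullMeasurableSet)
    ⟨0, ne_top_of_le_ne_top hΩ (measure_mono (sep_subset _ _))⟩]
  exact le_iInf fun n => h _ (hu_gt n)

lemma exists_le_measureReal_sep_le (hΩ : μ Ω ≠ ∞) (hAΩ : A < μ.real Ω) :
    ∃ s, A ≤ μ.real {x ∈ Ω | f x ≤ s} := by
  have hunion : ⋃ s : ℝ, {x ∈ Ω | f x ≤ s} = Ω :=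
    Subset.antisymm (iUnion_subset fun _ => sep_subset _ _)
      fun x hx => mem_iUnion.2 ⟨f x, hx, le_rfl⟩
  have htendsto := tendsto_measure_iUnion_atTop (μ := μ)
    (s := fun s : ℝ => {x ∈ Ω | f x ≤ s}) fun _ _ hst _ hx => ⟨hx.1, hx.2.trans hst⟩
  rw [hunion] at htendsto
  obtain ⟨s, hs⟩ :=
    ((tendsto_order.1 ((ENNReal.tendsto_toReal hΩ).comp htendsto)).1 _ hAΩ).exists
  exact ⟨s, hs.le⟩

theorem measureReal_sep_le_sInf_eq (hΩm : MeasurableSet Ω) (hΩ : μ Ω ≠ ∞)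
    (hfm : Measurable f) (hf0 : ∀ x ∈ Ω, 0 ≤ f x)
    (hlevel : ∀ s, 0 ≤ s → μ {x ∈ Ω | f x = s} = 0) (hA0 : 0 < A) (hAΩ : A < μ.real Ω) :
    μ.real {x ∈ Ω | f x ≤ sInf {s | A ≤ μ.real {x ∈ Ω | f x ≤ s}}} = A := by
  set S := {s | A ≤ μ.real {x ∈ Ω | f x ≤ s}}
  set t := sInf S
  have hfin : ∀ s, μ {x ∈ Ω | f x ≤ s} ≠ ∞ :=
    fun _ => ne_top_of_le_ne_top hΩ (measure_mono (sep_subset _ _))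
  have hS_nonneg : ∀ s ∈ S, 0 ≤ s := by
    intro s hs
    by_contra! hneg
    have hempty : {x ∈ Ω | f x ≤ s} = ∅ :=
      eq_empty_of_forall_notMem fun x hx => (hx.2.trans_lt hneg).not_ge (hf0 x hx.1)
    simp only [S, mem_ofPred_eq, hempty, measureReal_empty] at hs
    exact hs.not_gt hA0
  have hS_ne : S.Nonempty := exists_le_measureReal_sep_le hΩ hAΩ
  have hS_bdd : BddBelow S := ⟨0, hS_nonneg⟩
  apply le_antisymm
  · have hlt : μ {x ∈ Ω | f x < t} ≤ ENNReal.ofReal A :=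
      measure_sep_lt_le_of_forall_lt fun s hst => by
        have hsS : s ∉ S := notMem_of_lt_csInf hst hS_bdd
        exact (ENNReal.le_ofReal_iff_toReal_le (hfin s) hA0.le).2 (not_le.1 hsS).le
    have hsplit : {x ∈ Ω | f x ≤ t} ⊆ {x ∈ Ω | f x < t} ∪ {x ∈ Ω | f x = t} :=
      fun x ⟨hxΩ, hxt⟩ => hxt.lt_or_eq.imp (⟨hxΩ, ·⟩) (⟨hxΩ, ·⟩)
    refine ENNReal.toReal_le_of_le_ofReal hA0.le ?_
    calc μ {x ∈ Ω | f x ≤ t} ≤ μ {x ∈ Ω | f x < t} + μ {x ∈ Ω | f x = t} :=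
          (measure_mono hsplit).trans (measure_union_le _ _)
      _ ≤ ENNReal.ofReal A := by rw [hlevel t (le_csInf hS_ne hS_nonneg), add_zero]; exact hlt
  · refine (ENNReal.ofReal_le_iff_le_toReal (hfin t)).1
      (le_measure_sep_le_of_forall_gt hΩm hΩ hfm fun s hts => ?_)
    obtain ⟨r, hrS, hrs⟩ := exists_lt_of_csInf_lt hS_ne hts
    exact ((ENNReal.ofReal_le_iff_le_toReal (hfin r)).2 hrS).trans
      (measure_mono fun x hx => ⟨hx.1, hx.2.trans hrs.le⟩)

end Quantile

section Exchange

variable {α : Type*} [MeasurableSpace α] {μ : Measure α} {f : α → ℝ} {s t : Set α} {c : ℝ}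

lemma measure_sdiff_comm_of_measure_eq (hs : MeasurableSet s) (ht : MeasurableSet t)
    (hst : μ s = μ t) (hμt : μ t ≠ ∞) : μ (s \ t) = μ (t \ s) := by
  have hinter : μ (s ∩ t) ≠ ∞ := ne_top_of_le_ne_top hμt (measure_mono inter_subset_right)
  refine (ENNReal.add_right_inj hinter).1 ?_
  rw [measure_inter_add_sdiff s ht, inter_comm, measure_inter_add_sdiff t hs, hst]

lemma setIntegral_le_mul_measureReal (hs : MeasurableSet s) (hμs : μ s ≠ ∞)
    (hf : IntegrableOn f s μ) (h : ∀ x ∈ s, f x ≤ c) : ∫ x in s, f x ∂μ ≤ c * μ.real s := by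
  rw [mul_comm, ← smul_eq_mul, ← setIntegral_const]
  exact setIntegral_mono_on hf (integrableOn_const hμs) hs h

lemma mul_measureReal_lt_setIntegral (hs : MeasurableSet s) (hμs : μ s ≠ ∞) (hμs0 : 0 < μ s)
    (hf : IntegrableOn f s μ) (h : ∀ x ∈ s, c < f x) : c * μ.real s < ∫ x in s, f x ∂μ := by
  have hconst : IntegrableOn (fun _ => c) s μ := integrableOn_const hμs
  have hpos : 0 < ∫ x in s, (f x - c) ∂μ := by
    rw [setIntegral_pos_iff_support_of_nonneg_ae
      (ae_restrict_of_forall_mem hs fun x hx => sub_nonneg.2 (h x hx).le) (hf.sub hconst)]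
    exact hμs0.trans_le (measure_mono fun x hx => ⟨sub_ne_zero.2 (h x hx).ne', hx⟩)
  rw [integral_sub hf hconst, setIntegral_const, smul_eq_mul] at hpos
  linarith

theorem setIntegral_lt_setIntegral_of_measure_eq (hs : MeasurableSet s) (ht : MeasurableSet t)
    (hst : μ s = μ t) (hμt : μ t ≠ ∞) (hpos : 0 < μ (s ∆ t))
    (hfs : IntegrableOn f s μ) (hft : IntegrableOn f t μ)
    (hle : ∀ x ∈ s \ t, f x ≤ c) (hlt : ∀ x ∈ t \ s, c < f x) :
    ∫ x in s, f x ∂μ < ∫ x in t, f x ∂μ := by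
  have hdiff := measure_sdiff_comm_of_measure_eq hs ht hst hμt
  have hμts : μ (t \ s) ≠ ∞ := ne_top_of_le_ne_top hμt (measure_mono sdiff_subset)
  have hμts0 : 0 < μ (t \ s) := by
    rw [measure_symmDiff_eq hs.nullMeasurableSet ht.nullMeasurableSet, hdiff] at hpos
    simpa using hpos
  calc ∫ x in s, f x ∂μ = ∫ x in s ∩ t, f x ∂μ + ∫ x in s \ t, f x ∂μ :=
        (integral_inter_add_sdiff ht hfs).symm
    _ ≤ ∫ x in t ∩ s, f x ∂μ + c * μ.real (t \ s) := by
        rw [inter_comm, measureReal_def, ← hdiff]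
        gcongr
        exact setIntegral_le_mul_measureReal (hs.diff ht) (hdiff ▸ hμts)
          (hfs.mono_set sdiff_subset) hle
    _ < ∫ x in t ∩ s, f x ∂μ + ∫ x in t \ s, f x ∂μ := by
        gcongr
        exact mul_measureReal_lt_setIntegral (ht.diff hs) hμts hμts0
          (hft.mono_set sdiff_subset) hlt
    _ = ∫ x in t, f x ∂μ := integral_inter_add_sdiff hs hft

end Exchange

lemma setIntegral_weighted_indicator_mul {α : Type*} [MeasurableSpace α] {μ : Measure α}
    {Ω E : Set α} {f : α → ℝ} (hΩm : MeasurableSet Ω) (hEm : MeasurableSet E) (hEΩ : E ⊆ Ω)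
    (hf : IntegrableOn f Ω μ) (a b : ℝ) :
    ∫ x in Ω, (E.indicator (fun _ => b) x + (Ω \ E).indicator (fun _ => a) x) * f x ∂μ =
      a * ∫ x in Ω, f x ∂μ + (b - a) * ∫ x in E, f x ∂μ := by
  have hpointwise : ∀ x ∈ Ω,
      (E.indicator (fun _ => b) x + (Ω \ E).indicator (fun _ => a) x) * f x =
        a * f x + (b - a) * E.indicator f x := by
    intro x hxΩ
    by_cases hxE : x ∈ E
    · simp only [indicator_of_mem hxE, indicator_of_notMem (fun h : x ∈ Ω \ E => h.2 hxE)]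
      ring
    · simp only [indicator_of_notMem hxE, indicator_of_mem (mem_sdiff_of_mem hxΩ hxE)]
      ring
  rw [setIntegral_congr_fun hΩm hpointwise, integral_add (hf.const_mul a)
    ((hf.indicator hEm).const_mul _), integral_const_mul, integral_const_mul,
    setIntegral_indicator hEm, inter_eq_right.2 hEΩ]

theorem sublevel_set_strict_minimizer_general {n : ℕ}
    (Ω : Set (EuclideanSpace ℝ (Fin n)))
    (hΩm : MeasurableSet Ω) (hΩb : Bornology.IsBounded Ω)
    (f : EuclideanSpace ℝ (Fin n) → ℝ) (hfm : Measurable f)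
    (hf0 : ∀ x ∈ Ω, 0 ≤ f x) (hfi : IntegrableOn f Ω volume)
    (hlevel : ∀ s : ℝ, 0 ≤ s → volume {x ∈ Ω | f x = s} = 0)
    (α β : ℝ) (hαβ : α < β)
    (A : ℝ) (hA0 : 0 < A) (hAΩ : A < (volume Ω).toReal)
    (t : ℝ) (ht : t = sInf {s : ℝ | A ≤ (volume {x ∈ Ω | f x ≤ s}).toReal})
    (D₁ : Set (EuclideanSpace ℝ (Fin n))) (hD₁ : D₁ = {x ∈ Ω | f x ≤ t})
    (D : Set (EuclideanSpace ℝ (Fin n))) (hDΩ : D ⊆ Ω) (hDm : MeasurableSet D)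
    (hDA : (volume D).toReal = A) (hsym : 0 < volume (symmDiff D D₁)) :
    (∫ x in Ω,
      (D₁.indicator (fun _ => β) x + (Ω \ D₁).indicator (fun _ => α) x) * f x) <
    ∫ x in Ω,
      (D.indicator (fun _ => β) x + (Ω \ D).indicator (fun _ => α) x) * f x := by
  have hΩ : volume Ω ≠ ∞ := hΩb.measure_lt_top.ne
  have hD₁Ω : D₁ ⊆ Ω := hD₁ ▸ sep_subset _ _
  have hD₁m : MeasurableSet D₁ := hD₁ ▸ hΩm.inter (hfm measurableSet_Iic)
  have hD₁A : volume.real D₁ = A :=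
    hD₁ ▸ ht ▸ measureReal_sep_le_sInf_eq hΩm hΩ hfm hf0 hlevel hA0 hAΩ
  have hD₁D : volume D₁ = volume D :=
    (ENNReal.toReal_eq_toReal_iff' (measure_ne_top_of_subset hD₁Ω hΩ)
      (measure_ne_top_of_subset hDΩ hΩ)).1 (hD₁A.trans hDA.symm)
  have hle : ∀ x ∈ D₁ \ D, f x ≤ t := fun x hx => (hD₁ ▸ hx.1).2
  have hlt : ∀ x ∈ D \ D₁, t < f x :=
    fun x ⟨hxD, hxD₁⟩ => not_le.1 fun hxt => hxD₁ (hD₁ ▸ ⟨hDΩ hxD, hxt⟩)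
  have hintegral : ∫ x in D₁, f x < ∫ x in D, f x :=
    setIntegral_lt_setIntegral_of_measure_eq hD₁m hDm hD₁D (measure_ne_top_of_subset hDΩ hΩ)
      (symmDiff_comm D D₁ ▸ hsym) (hfi.mono_set hD₁Ω) (hfi.mono_set hDΩ) hle hlt
  have hβα : 0 < β - α := sub_pos.2 hαβ
  rw [setIntegral_weighted_indicator_mul hΩm hD₁m hD₁Ω hfi,
    setIntegral_weighted_indicator_mul hΩm hDm hDΩ hfi]
  gcongr

/-- strict inequality version: if `D` differs from the sublevel set `D₁`
on a set of positive measure, then the corresponding weighted integral is strictly larger. -/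
theorem sublevel_set_strict_minimizer {n : ℕ}
    (Ω : Set (EuclideanSpace ℝ (Fin n)))
    (hΩm : MeasurableSet Ω) (hΩb : Bornology.IsBounded Ω)
    (f : EuclideanSpace ℝ (Fin n) → ℝ) (hfm : Measurable f)
    (hf0 : ∀ x ∈ Ω, 0 ≤ f x) (hfi : IntegrableOn f Ω volume)
    (hlevel : ∀ s : ℝ, 0 ≤ s → volume {x ∈ Ω | f x = s} = 0)
    (α β : ℝ) (hα : 0 < α) (hαβ : α < β)
    (A : ℝ) (hA0 : 0 < A) (hAΩ : A < (volume Ω).toReal)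
    (t : ℝ) (ht : t = sInf {s : ℝ | A ≤ (volume {x ∈ Ω | f x ≤ s}).toReal})
    (D₁ : Set (EuclideanSpace ℝ (Fin n))) (hD₁ : D₁ = {x ∈ Ω | f x ≤ t})
    (D : Set (EuclideanSpace ℝ (Fin n))) (hDΩ : D ⊆ Ω) (hDm : MeasurableSet D)
    (hDA : (volume D).toReal = A) (hsym : 0 < volume (symmDiff D D₁)) :
    (∫ x in Ω,
      (D₁.indicator (fun _ => β) x + (Ω \ D₁).indicator (fun _ => α) x) * f x) <
    ∫ x in Ω,
      (D.indicator (fun _ => β) x + (Ω \ D).indicator (fun _ => α) x) * f x :=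
  sublevel_set_strict_minimizer_general Ω hΩm hΩb f hfm hf0 hfi hlevel α β hαβ A hA0 hAΩ t ht D₁ hD₁
    D hDΩ hDm hDA hsym
end
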